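/- There exists exactly one continuous function θ:[0,∞)→ℝ with θ(0)=−π/2 such that for every z≥0 there exists r>0 with r·cos(θ(z))=√z/Γ(3/4−z) and r·sin(θ(z))=−1/Γ(1/4−z). -/

import Mathlib

/-!
By the reflection formula, for `z ≥ 0` the point `w(z) = √z/Γ(3/4−z) − i/Γ(1/4−z)` equals
`A cos φ + i B sin φ` with `φ = πz − π/4`, `A = √z Γ(1/4+z)/π ≥ 0` and `B = Γ(3/4+z)/π > 0`.
Rotating by `−φ` gives a point of real part `A cos² φ + B sin² φ > 0`, so `φ + arg (e^{−iφ} w)`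
is a continuous polar angle of `w` (the principal argument is continuous off the negative axis),
and a shift by a multiple of `2π` makes it `−π/2` at `0`. Polar angles of a point agree in
`ℝ/2πℤ`, and `ℝ → ℝ/2πℤ` is a covering map, so a continuous polar angle on the connected
`[0, ∞)` is determined by its value at `0`.
-/

open Real Set

open Complex (arg I slitPlane)

def IsPolarAngle (p : ℂ) (θ : ℝ) : Prop :=
  ∃ r > (0:ℝ), r * cos θ = p.re ∧ r * sin θ = p.im

theorem isPolarAngle_iff {p : ℂ} {θ : ℝ} :
    IsPolarAngle p θ ↔ p ≠ 0 ∧ (θ : Real.Angle) = arg p := by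
  constructor
  · rintro ⟨r, hr, hre, him⟩
    have hp : p = r * (cos θ + sin θ * I) := by
      apply Complex.ext <;> simp [← hre, ← him, -Complex.ofReal_cos, -Complex.ofReal_sin]
    refine ⟨?_, by rw [hp]; exact (Complex.arg_mul_cos_add_sin_mul_I_coe_angle hr θ).symm⟩
    rintro rfl
    simp only [Complex.zero_re, Complex.zero_im, mul_eq_zero, hr.ne', false_or] at hre him
    simpa [hre, him] using sin_sq_add_cos_sq θ
  · rintro ⟨hp, hθ⟩
    refine ⟨‖p‖, norm_pos_iff.mpr hp, ?_, ?_⟩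
    · rw [← Real.Angle.cos_coe, hθ, Real.Angle.cos_coe, Complex.norm_mul_cos_arg]
    · rw [← Real.Angle.sin_coe, hθ, Real.Angle.sin_coe, Complex.norm_mul_sin_arg]

theorem Complex.arg_exp_ofReal_mul_I_coe_angle (φ : ℝ) :
    (arg (Complex.exp (φ * I)) : Real.Angle) = φ := by
  rw [Complex.exp_ofReal_mul_I, ← Real.Angle.cos_coe, ← Real.Angle.sin_coe,
    Complex.arg_cos_add_sin_mul_I_coe_angle]

section Lifts

variable {X : Type*} [TopologicalSpace X] {S : Set X} {w : X → ℂ}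

-- `Real.Angle` is `AddCircle (2 * π)`.
theorem eqOn_of_isPolarAngle (hS : IsPreconnected S) {θ₁ θ₂ : X → ℝ}
    (h₁ : ContinuousOn θ₁ S) (h₂ : ContinuousOn θ₂ S)
    (hp₁ : ∀ x ∈ S, IsPolarAngle (w x) (θ₁ x)) (hp₂ : ∀ x ∈ S, IsPolarAngle (w x) (θ₂ x))
    {x₀ : X} (hx₀ : x₀ ∈ S) (h₀ : θ₁ x₀ = θ₂ x₀) : EqOn θ₁ θ₂ S :=
  (AddCircle.isCoveringMap_coe (2 * π)).eqOn_of_comp_eqOn hS h₁ h₂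
    (fun x hx => (isPolarAngle_iff.mp (hp₁ x hx)).2.trans
      (isPolarAngle_iff.mp (hp₂ x hx)).2.symm) hx₀ h₀

theorem exists_continuousOn_isPolarAngle {φ : X → ℝ} (hw : ContinuousOn w S)
    (hφ : ContinuousOn φ S) (hslit : ∀ x ∈ S, Complex.exp (-φ x * I) * w x ∈ slitPlane)
    {x₀ : X} (hx₀ : x₀ ∈ S) {a : ℝ} (ha : IsPolarAngle (w x₀) a) :
    ∃ θ : X → ℝ, ContinuousOn θ S ∧ θ x₀ = a ∧ ∀ x ∈ S, IsPolarAngle (w x) (θ x) := by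
  set u : X → ℂ := fun x => Complex.exp (-φ x * I) * w x
  have hw_eq (x : X) : w x = Complex.exp (φ x * I) * u x := by
    simp only [u, ← mul_assoc, ← Complex.exp_add, neg_mul, add_neg_cancel, Complex.exp_zero,
      one_mul]
  set θ₀ : X → ℝ := fun x => φ x + arg (u x)
  have hθ₀ (x : X) (hx : x ∈ S) : IsPolarAngle (w x) (θ₀ x) := by
    have hu : u x ≠ 0 := Complex.slitPlane_ne_zero (hslit x hx)
    rw [isPolarAngle_iff, hw_eq, Complex.arg_mul_coe_angle (Complex.exp_ne_zero _) hu,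
      Complex.arg_exp_ofReal_mul_I_coe_angle, Real.Angle.coe_add]
    exact ⟨mul_ne_zero (Complex.exp_ne_zero _) hu, rfl⟩
  have hu : ContinuousOn u S := (Complex.continuous_exp.comp_continuousOn
      ((Complex.continuous_ofReal.comp_continuousOn hφ).neg.mul continuousOn_const)).mul hw
  have hcont : ContinuousOn θ₀ S := hφ.add fun x hx =>
    (Complex.continuousAt_arg (x := u x) (hslit x hx)).comp_continuousWithinAt (hu x hx)
  refine ⟨fun x => θ₀ x + (a - θ₀ x₀), hcont.add continuousOn_const, by ring, fun x hx => ?_⟩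
  have hshift : ((a - θ₀ x₀ : ℝ) : Real.Angle) = 0 := by
    rw [Real.Angle.coe_sub, (isPolarAngle_iff.mp ha).2, (isPolarAngle_iff.mp (hθ₀ x₀ hx₀)).2,
      sub_self]
  obtain ⟨hne, hangle⟩ := isPolarAngle_iff.mp (hθ₀ x hx)
  exact isPolarAngle_iff.mpr ⟨hne, by rw [Real.Angle.coe_add, hshift, add_zero, hangle]⟩

end Lifts

theorem Real.continuous_inv_Gamma : Continuous fun s : ℝ => (Gamma s)⁻¹ := by
  have h : (fun s : ℝ => (Gamma s)⁻¹) = fun s : ℝ => (Complex.Gamma s)⁻¹.re := by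
    funext s
    rw [Complex.Gamma_ofReal, ← Complex.ofReal_inv, Complex.ofReal_re]
  rw [h]
  exact Complex.continuous_re.comp
    (Complex.differentiable_one_div_Gamma.continuous.comp Complex.continuous_ofReal)

theorem Real.inv_Gamma_eq_Gamma_one_sub_mul_sin {s : ℝ} (hs : Gamma (1 - s) ≠ 0) :
    (Gamma s)⁻¹ = Gamma (1 - s) * sin (π * s) / π := by
  rw [eq_div_of_mul_eq hs (Gamma_mul_Gamma_one_sub s)]
  simp only [div_eq_mul_inv, mul_inv, inv_inv]
  ring

noncomputable def gammaCurve (z : ℝ) : ℂ :=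
  ⟨√z * (Gamma (3/4 - z))⁻¹, -(Gamma (1/4 - z))⁻¹⟩

theorem continuous_gammaCurve : Continuous gammaCurve :=
  Complex.equivRealProdCLM.symm.continuous.comp <|
    (continuous_sqrt.mul (continuous_inv_Gamma.comp (continuous_const.sub continuous_id))).prodMk
      (continuous_inv_Gamma.comp (continuous_const.sub continuous_id)).neg

theorem gammaCurve_re {z : ℝ} (hz : 0 ≤ z) :
    (gammaCurve z).re = √z * Gamma (1/4 + z) / π * cos (π * z - π / 4) := by
  have hG : Gamma (1 - (3/4 - z)) ≠ 0 := (Gamma_pos_of_pos (by linarith)).ne'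
  rw [gammaCurve, inv_Gamma_eq_Gamma_one_sub_mul_sin hG,
    show π * (3/4 - z) = π / 2 - (π * z - π / 4) by ring, sin_pi_div_two_sub]
  ring_nf

theorem gammaCurve_im {z : ℝ} (hz : 0 ≤ z) :
    (gammaCurve z).im = Gamma (3/4 + z) / π * sin (π * z - π / 4) := by
  have hG : Gamma (1 - (1/4 - z)) ≠ 0 := (Gamma_pos_of_pos (by linarith)).ne'
  rw [gammaCurve, inv_Gamma_eq_Gamma_one_sub_mul_sin hG,
    show π * (1/4 - z) = -(π * z - π / 4) by ring, sin_neg]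
  ring_nf

theorem re_exp_mul_gammaCurve_pos {z : ℝ} (hz : 0 ≤ z) :
    0 < (Complex.exp (-↑(π * z - π / 4) * I) * gammaCurve z).re := by
  set φ := π * z - π / 4
  set A := √z * Gamma (1/4 + z) / π
  set B := Gamma (3/4 + z) / π
  have hre : (Complex.exp (-↑φ * I) * gammaCurve z).re = A * cos φ ^ 2 + B * sin φ ^ 2 := by
    rw [← Complex.ofReal_neg, Complex.mul_re, Complex.exp_ofReal_mul_I_re,
      Complex.exp_ofReal_mul_I_im, gammaCurve_re hz, gammaCurve_im hz, cos_neg, sin_neg]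
    ring
  have hB : 0 < B := div_pos (Gamma_pos_of_pos (by linarith)) pi_pos
  rw [hre]
  rcases hz.eq_or_lt with rfl | hz
  · have hsin : sin φ ^ 2 = 1 / 2 := by
      rw [show φ = -(π / 4) by ring, sin_neg, neg_sq, sin_pi_div_four, div_pow,
        sq_sqrt zero_le_two]
      norm_num
    rw [show A = 0 by simp [A], hsin]
    positivity
  · have hA : 0 < A := div_pos (mul_pos (sqrt_pos.mpr hz) (Gamma_pos_of_pos (by linarith))) pi_pos
    -- `A cos² φ + B sin² φ ≥ min A B` since `cos² φ + sin² φ = 1`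
    nlinarith [sin_sq_add_cos_sq φ, min_le_left A B, min_le_right A B, lt_min hA hB,
      sq_nonneg (sin φ), sq_nonneg (cos φ)]

theorem isPolarAngle_gammaCurve_zero : IsPolarAngle (gammaCurve 0) (-(π / 2)) :=
  ⟨(Gamma (1/4))⁻¹, inv_pos.mpr (Gamma_pos_of_pos (by norm_num)), by simp [gammaCurve],
    by simp [gammaCurve]⟩

/-- There exists exactly one continuous function `θ : [0,∞) → ℝ` with
`θ(0) = −π/2` such that for every `z ≥ 0` there is `r > 0` with
`r·cos(θ(z)) = √z/Γ(3/4−z)` and `r·sin(θ(z)) = −1/Γ(1/4−z)`. (Functions on `[0,∞)` are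
modelled as functions on `ℝ`; uniqueness is uniqueness of the values on `[0,∞)`.) -/
theorem stmt8 :
    ∃ θ : ℝ → ℝ,
      (ContinuousOn θ (Ici 0) ∧ θ 0 = -(π/2) ∧
        ∀ z ≥ (0:ℝ), ∃ r > (0:ℝ),
          r * Real.cos (θ z) = Real.sqrt z * (Real.Gamma (3/4 - z))⁻¹ ∧
          r * Real.sin (θ z) = -(Real.Gamma (1/4 - z))⁻¹) ∧
      ∀ θ' : ℝ → ℝ,
        (ContinuousOn θ' (Ici 0) ∧ θ' 0 = -(π/2) ∧
          ∀ z ≥ (0:ℝ), ∃ r > (0:ℝ),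
            r * Real.cos (θ' z) = Real.sqrt z * (Real.Gamma (3/4 - z))⁻¹ ∧
            r * Real.sin (θ' z) = -(Real.Gamma (1/4 - z))⁻¹) →
        ∀ z ≥ (0:ℝ), θ' z = θ z := by
  have hφ : Continuous fun z : ℝ => π * z - π / 4 := by fun_prop
  obtain ⟨θ, hθc, hθ0, hθ⟩ := exists_continuousOn_isPolarAngle (S := Ici 0)
    continuous_gammaCurve.continuousOn hφ.continuousOn
    (fun z hz => Complex.mem_slitPlane_iff.mpr (Or.inl (re_exp_mul_gammaCurve_pos hz)))
    self_mem_Ici isPolarAngle_gammaCurve_zero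
  refine ⟨θ, ⟨hθc, hθ0, hθ⟩, fun θ' ⟨hθ'c, hθ'0, hθ'⟩ z hz => ?_⟩
  exact eqOn_of_isPolarAngle (w := gammaCurve) isPreconnected_Ici hθ'c hθc hθ' hθ self_mem_Ici
    (hθ'0.trans hθ0.symm) hz
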